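/- In a directed acyclic graph G, for any three pairwise disjoint sets of vertices W1, W2, W3, if no vertex of W1 is an ancestor of any vertex of W2 in the graph G' obtained from G by deleting all edges pointing into vertices of W1 ∪ W3, then every path in G' between a vertex of W1 and a vertex of W2 is blocked given W3 (i.e., W2 is d-separated from W1 given W3 in G'). -/

import Mathlib

/-!
Walk along a trail starting at `u ∈ W₁`. Since no edge points into `W₁`, the first edge leaves `u`;
follow the trail as long as its edges point forward. If they all do, `u` is an ancestor of the
endpoint in `W₂`, which is excluded. Otherwise the first backward edge closes a collider `a → b ← c`.
Every descendant of `b`, including `b`, is the head of an edge of the mutilated graph, so none lies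
in `W₃`, and the collider blocks the trail.
-/

variable {V : Type*}

/-- Edges of `G` with all edges pointing into `X` removed. -/
def Mut (E : V → V → Prop) (X : Set V) : V → V → Prop := fun u v => E u v ∧ v ∉ X

/-- Ancestors of a set `S`: vertices with a nonempty directed path to some member of `S`. -/
def Anc (E : V → V → Prop) (S : Set V) : Set V := {u | ∃ s ∈ S, Relation.TransGen E u s}

/-- Adjacency in the undirected skeleton. -/
def Adj (E : V → V → Prop) (u v : V) : Prop := E u v ∨ E v u

/-- `p` is an (undirected) path from `u` to `v` in the directed graph with edges `E`. -/
def IsTrail (E : V → V → Prop) (p : List V) (u v : V) : Prop :=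
  p.head? = some u ∧ p.getLast? = some v ∧ p.Chain' (Adj E)

/-- Descendants of `b` (including `b` itself). -/
def Desc (E : V → V → Prop) (b : V) : Set V := {d | b = d ∨ Relation.TransGen E b d}

/-- Pearl's blocking criterion: the path `p` contains a non-collider node in `Z`,
or a collider node none of whose descendants (including itself) lies in `Z`. -/
def Blocked (E : V → V → Prop) (Z : Set V) (p : List V) : Prop :=
  ∃ (l r : List V) (a b c : V), p = l ++ a :: b :: c :: r ∧
    ((¬ (E a b ∧ E c b) ∧ b ∈ Z) ∨ ((E a b ∧ E c b) ∧ ∀ d ∈ Desc E b, d ∉ Z))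

/-- `W₂` is d-separated from `W₁` given `Z`. -/
def DSep (E : V → V → Prop) (W₁ W₂ Z : Set V) : Prop :=
  ∀ (u v : V) (p : List V), u ∈ W₁ → v ∈ W₂ → IsTrail E p u v → Blocked E Z p

def HasCollider (E : V → V → Prop) (p : List V) : Prop :=
  ∃ (l r : List V) (a b c : V), p = l ++ a :: b :: c :: r ∧ E a b ∧ E c b

theorem transGen_or_hasCollider_of_chain {E : V → V → Prop} :
    ∀ (p : List V) {a b v : V}, E a b → (b :: p).getLast? = some v →
      (b :: p).IsChain (Adj E) → Relation.TransGen E a v ∨ HasCollider E (a :: b :: p)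
  | [], a, b, v, hab, hv, _ => by
    simp only [List.getLast?_singleton, Option.some.injEq] at hv
    exact .inl (hv ▸ .single hab)
  | c :: p, a, b, v, hab, hv, hp => by
    obtain ⟨hbc | hcb, hp⟩ := List.isChain_cons_cons.mp hp
    · rcases transGen_or_hasCollider_of_chain p hbc (by simpa using hv) hp with
        hbv | ⟨l, r, a', b', c', hsplit, ha'b', hc'b'⟩
      · exact .inl (.head hab hbv)
      · exact .inr ⟨a :: l, r, a', b', c', by rw [hsplit]; rfl, ha'b', hc'b'⟩
    · exact .inr ⟨[], p, a, b, c, rfl, hab, hcb⟩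

theorem transGen_or_hasCollider_of_isTrail {E : V → V → Prop} {p : List V} {u v : V}
    (hp : IsTrail E p u v) (huv : u ≠ v) (hu : ∀ w, ¬ E w u) :
    Relation.TransGen E u v ∨ HasCollider E p := by
  obtain ⟨hhead, hlast, hchain⟩ := hp
  match p, hhead with
  | [_], rfl => exact absurd (by simpa using hlast) huv
  | _ :: b :: q, rfl =>
    obtain ⟨hub | hbu, hchain⟩ := List.isChain_cons_cons.mp hchain
    · exact transGen_or_hasCollider_of_chain q hub (by simpa using hlast) hchain
    · exact absurd hbu (hu b)

theorem notMem_of_mem_desc_mut {E : V → V → Prop} {X : Set V} {a b d : V}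
    (hab : Mut E X a b) (hd : d ∈ Desc (Mut E X) b) : d ∉ X := by
  rcases hd with rfl | hbd
  · exact hab.2
  · obtain ⟨_, _, hcd⟩ := Relation.TransGen.tail'_iff.mp hbd
    exact hcd.2

theorem blocked_mut_of_hasCollider {E : V → V → Prop} {X Z : Set V} {p : List V}
    (hp : HasCollider (Mut E X) p) (hZ : Z ⊆ X) : Blocked (Mut E X) Z p := by
  obtain ⟨l, r, a, b, c, rfl, hab, hcb⟩ := hp
  exact ⟨l, r, a, b, c, rfl, .inr ⟨⟨hab, hcb⟩, fun d hd hdZ =>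
    notMem_of_mem_desc_mut hab hd (hZ hdZ)⟩⟩

theorem stmt0_general (E : V → V → Prop)
    (W₁ W₂ W₃ : Set V)
    (h12 : Disjoint W₁ W₂)
    (hanc : ∀ w ∈ W₁, w ∉ Anc (Mut E (W₁ ∪ W₃)) W₂) :
    DSep (Mut E (W₁ ∪ W₃)) W₁ W₂ W₃ := by
  intro u v p hu hv hp
  have huv : u ≠ v := fun h => Set.disjoint_left.mp h12 hu (h ▸ hv)
  have hsource : ∀ w, ¬ Mut E (W₁ ∪ W₃) w u := fun _ hwu => hwu.2 (.inl hu)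
  rcases transGen_or_hasCollider_of_isTrail hp huv hsource with huv' | hcoll
  · exact absurd ⟨v, hv, huv'⟩ (hanc u hu)
  · exact blocked_mut_of_hasCollider hcoll Set.subset_union_right

/-- Lemma 1 of the cCBO paper: if no vertex of `W₁` is an ancestor of `W₂` in the
graph with all incoming edges into `W₁ ∪ W₃` removed, then `W₂` is d-separated
from `W₁` given `W₃` in that mutilated graph. -/
theorem stmt0 [Fintype V] (E : V → V → Prop)
    (hacy : ∀ v, ¬ Relation.TransGen E v v)
    (W₁ W₂ W₃ : Set V)
    (h12 : Disjoint W₁ W₂) (h13 : Disjoint W₁ W₃) (h23 : Disjoint W₂ W₃)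
    (hanc : ∀ w ∈ W₁, w ∉ Anc (Mut E (W₁ ∪ W₃)) W₂) :
    DSep (Mut E (W₁ ∪ W₃)) W₁ W₂ W₃ :=
  stmt0_general E W₁ W₂ W₃ h12 hanc
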